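/- Let U be a finite set, let z be a nondegenerate nonnegative weight vector, let S' ⊆ U, and for t ≥ 0 define the lifted weight vector z(t) by z(t)_{{p}} := z_{{p}} + t for every p ∈ S' and z(t)_E := z_E for all other E ⊆ U; write f_t(S) for the value of f(S) at z(t). Then for every nonempty S ⊆ U: (1) if S ∩ S' = ∅ then (d/dt) f_t(S)|_{t=0} = 0; (2) if S = {p} with p ∈ S' then (d/dt) f_t(S)|_{t=0} = 1; and (3) if every point of S ∩ S' has minimum norm among the points of S (i.e., ℓ(p) ≤ ℓ(q) for all p ∈ S ∩ S' and q ∈ S), then (d/dt) f_t(S)|_{t=0} ≥ 0. -/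

import Mathlib

/-!
Along `z(t) = z + t • χ`, with `χ` the indicator of the singletons `{p}`, `p ∈ S'`, `f_t(S)` is
near `t = 0` the quotient `N(t) / D(t)` of `N(t) = Σ_E z(t)_E f_t(S \ E)` and `D(t) = Σ_E z(t)_E`
over the sets `E` crossing `S`. By induction on `|S|` the derivative at `0` is
`(Σ_E χ_E (f(S \ E) - f(S)) + Σ_E z_E f'(S \ E)) / D(0)`. A crossing `E` with `χ_E ≠ 0` is a
singleton `{a}` with `a ∈ S ∩ S'`, and removing a point of minimal `ℓ` from `S` does not decrease
`f`: compare the average defining `f(S)` termwise with the one defining `f(S \ {a})`. Hence every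
term is nonnegative. Part (1) holds since `f(S)` only sees the weights of sets meeting `S`, and
part (2) since `f_t({p}) = ℓ(p) + t`.
-/

open Finset

variable {α : Type*} [Fintype α] [DecidableEq α]

/-- `E` crosses `S` if both `S ∩ E` and `S \ E` are nonempty. -/
def Crosses (E S : Finset α) : Prop := (S ∩ E).Nonempty ∧ (S \ E).Nonempty

instance (E S : Finset α) : Decidable (Crosses E S) := by unfold Crosses; infer_instance

/-- The family of subsets of the ground set crossing `S`. -/
def crossers (S : Finset α) : Finset (Finset α) := univ.filter (fun E => Crosses E S)

/-- `ℓ(p)`: total weight of the sets containing `p`. -/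
def ell (z : Finset α → ℝ) (p : α) : ℝ := ∑ E ∈ univ.filter (fun E => p ∈ E), z E

lemma card_sdiff_lt_of_mem_crossers {E S : Finset α} (h : E ∈ crossers S) :
    (S \ E).card < S.card := by
  have h' : Crosses E S := (mem_filter.mp h).2
  obtain ⟨⟨x, hx⟩, -⟩ := h'
  refine card_lt_card ((ssubset_iff_of_subset sdiff_subset).mpr ?_)
  exact ⟨x, (mem_inter.mp hx).1, fun hmem => (mem_sdiff.mp hmem).2 (mem_inter.mp hx).2⟩

/-- The function `f(S)` from the Closest Point Process. -/
noncomputable def fval (z : Finset α → ℝ) (S : Finset α) : ℝ :=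
  if S.card ≤ 1 then ∑ p ∈ S, ell z p
  else if 0 < ∑ E ∈ crossers S, z E then
    (∑ E ∈ (crossers S).attach, z E.1 * fval z (S \ E.1)) / (∑ E ∈ crossers S, z E)
  else 0
termination_by S.card
decreasing_by exact card_sdiff_lt_of_mem_crossers E.2

/-- A weight vector is nondegenerate if every `S` with `|S| ≥ 2` has positive crossing weight. -/
def Nondeg (z : Finset α → ℝ) : Prop :=
  ∀ S : Finset α, 2 ≤ S.card → 0 < ∑ E ∈ crossers S, z E

/-- The partial derivative `∂f(S)/∂z_T`. -/
noncomputable def pderivf (S T : Finset α) (z : Finset α → ℝ) : ℝ :=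
  fderiv ℝ (fun w : Finset α → ℝ => fval w S) z (Pi.single T 1)

/-- The pseudo-derivative `∂̂f(S)/∂̂z_T`. -/
noncomputable def pdhat (z : Finset α → ℝ) (S T : Finset α) : ℝ :=
  if S ⊆ T then 1
  else if S ∩ T = ∅ then 0
  else (∑ E ∈ (crossers S).attach, z E.1 * pdhat z (S \ E.1) T
        + fval z (S \ T) - ∑ E ∈ univ.filter (fun E => S ⊆ E), z E)
       / (∑ E ∈ crossers S, z E)
termination_by S.card
decreasing_by exact card_sdiff_lt_of_mem_crossers E.2

/-- The `m`-th harmonic number. -/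
noncomputable def harm (m : ℕ) : ℝ := ∑ j ∈ Finset.range m, 1 / ((j : ℝ) + 1)

/-- The lifted weight vector `z(t)`: the weight of each singleton `{p}`, `p ∈ S'`,
is increased by `t`; all other weights are unchanged. -/
noncomputable def zlift (z : Finset α → ℝ) (S' : Finset α) (t : ℝ) : Finset α → ℝ :=
  fun E => if E.card = 1 ∧ E ⊆ S' then z E + t else z E

omit [Fintype α] in
theorem Crosses.mono {E S T : Finset α} (h : Crosses E T) (hTS : T ⊆ S) : Crosses E S :=
  ⟨h.1.mono (inter_subset_inter_right hTS), h.2.mono (sdiff_subset_sdiff hTS le_rfl)⟩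

theorem mem_crossers {E S : Finset α} : E ∈ crossers S ↔ Crosses E S := by
  simp [crossers]

theorem filter_crossers_of_subset {S T : Finset α} (hTS : T ⊆ S) :
    (crossers S).filter (fun E => Crosses E T) = crossers T := by
  ext E
  simp only [mem_filter, mem_crossers]
  exact ⟨And.right, fun h => ⟨h.mono hTS, h⟩⟩

theorem crossers_eq_empty_of_card_le_one {S : Finset α} (h : S.card ≤ 1) : crossers S = ∅ := by
  refine eq_empty_of_forall_notMem fun E hE => ?_
  obtain ⟨⟨a, ha⟩, ⟨b, hb⟩⟩ := mem_crossers.mp hE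
  rw [mem_inter] at ha
  rw [mem_sdiff] at hb
  exact hb.2 (card_le_one.mp h a ha.1 b hb.1 ▸ ha.2)

theorem fval_of_card_le_one (z : Finset α → ℝ) {S : Finset α} (h : S.card ≤ 1) :
    fval z S = ∑ p ∈ S, ell z p := by
  rw [fval, if_pos h]

theorem fval_singleton (z : Finset α → ℝ) (p : α) : fval z {p} = ell z p := by
  rw [fval_of_card_le_one z (card_singleton p).le, sum_singleton]

theorem fval_of_two_le_card {z : Finset α → ℝ} {S : Finset α} (h2 : 2 ≤ S.card)
    (hD : 0 < ∑ E ∈ crossers S, z E) :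
    fval z S = (∑ E ∈ crossers S, z E * fval z (S \ E)) / ∑ E ∈ crossers S, z E := by
  rw [fval, if_neg (by omega), if_pos hD, sum_attach (crossers S) (fun E => z E * fval z (S \ E))]

theorem fval_congr {z w : Finset α → ℝ} (S : Finset α)
    (h : ∀ E, (E ∩ S).Nonempty → z E = w E) : fval z S = fval w S := by
  by_cases hc : S.card ≤ 1
  · rw [fval_of_card_le_one z hc, fval_of_card_le_one w hc]
    refine sum_congr rfl fun p hp => sum_congr rfl fun E hE => h E ⟨p, ?_⟩
    exact mem_inter.mpr ⟨(mem_filter.mp hE).2, hp⟩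
  · have hzw : ∀ E ∈ crossers S, z E = w E := fun E hE =>
      h E (inter_comm S E ▸ (mem_crossers.mp hE).1)
    have hD : ∑ E ∈ crossers S, z E = ∑ E ∈ crossers S, w E := sum_congr rfl hzw
    rw [fval, fval, if_neg hc, if_neg hc, hD]
    refine if_ctx_congr Iff.rfl (fun _ => congrArg (· / _) (sum_congr rfl fun E _ => ?_))
      fun _ => rfl
    have hrec : fval z (S \ E.1) = fval w (S \ E.1) := fval_congr (S \ E.1) fun F hF =>
      h F (hF.mono (inter_subset_inter_left sdiff_subset))
    rw [hzw E E.2, hrec]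
termination_by S.card
decreasing_by exact card_sdiff_lt_of_mem_crossers E.2

section Nondegenerate

variable {z : Finset α → ℝ}

theorem sum_crossers_mul_fval (hnd : Nondeg z) (S : Finset α) :
    ∑ E ∈ crossers S, z E * fval z (S \ E) = (∑ E ∈ crossers S, z E) * fval z S := by
  by_cases hc : S.card ≤ 1
  · simp [crossers_eq_empty_of_card_le_one hc]
  · have hD := hnd S (by omega)
    rw [fval_of_two_le_card (by omega) hD, mul_div_cancel₀ _ hD.ne']

theorem sum_crossers_mul_ite_crosses (hnd : Nondeg z) {S T : Finset α} (hTS : T ⊆ S) :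
    ∑ E ∈ crossers S, z E * (if Crosses E T then fval z (T \ E) else fval z T)
      = (∑ E ∈ crossers S, z E) * fval z T := by
  rw [← sum_filter_add_sum_filter_not (crossers S) (fun E => Crosses E T),
    ← sum_filter_add_sum_filter_not (crossers S) (fun E => Crosses E T) z, add_mul]
  congr 1
  · rw [sum_congr rfl fun E hE => by rw [if_pos (mem_filter.mp hE).2],
      filter_crossers_of_subset hTS, sum_crossers_mul_fval hnd]
  · rw [sum_mul]
    exact sum_congr rfl fun E hE => by rw [if_neg (mem_filter.mp hE).2]

theorem le_fval_of_forall_le_ell (hz : ∀ E, 0 ≤ z E) (hnd : Nondeg z) {c : ℝ} {S : Finset α}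
    (hS : S.Nonempty) (h : ∀ q ∈ S, c ≤ ell z q) : c ≤ fval z S := by
  by_cases hc : S.card ≤ 1
  · obtain ⟨q, rfl⟩ := card_eq_one.mp (le_antisymm hc hS.card_pos)
    simpa [fval_singleton] using h q (mem_singleton_self q)
  · have hD := hnd S (by omega)
    rw [fval_of_two_le_card (by omega) hD, le_div_iff₀ hD, mul_sum]
    refine sum_le_sum fun E hE => ?_
    rw [mul_comm]
    refine mul_le_mul_of_nonneg_left ?_ (hz E)
    exact le_fval_of_forall_le_ell hz hnd (mem_crossers.mp hE).2
      fun q hq => h q (mem_sdiff.mp hq).1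
termination_by S.card
decreasing_by exact card_sdiff_lt_of_mem_crossers hE

theorem fval_le_fval_erase_of_forall_ell_le (hz : ∀ E, 0 ≤ z E) (hnd : Nondeg z)
    {S : Finset α} {p : α} (hp : p ∈ S) (h2 : 2 ≤ S.card) (hmin : ∀ q ∈ S, ell z p ≤ ell z q) :
    fval z S ≤ fval z (S.erase p) := by
  set T := S.erase p with hT_def
  have hT : T.Nonempty := by rw [← card_pos, card_erase_of_mem hp]; omega
  have hTS : T ⊆ S := erase_subset p S
  -- termwise comparison of the averages defining `f(S)` and `f(T)`
  have hbound : ∀ E ∈ crossers S,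
      fval z (S \ E) ≤ if Crosses E T then fval z (T \ E) else fval z T := by
    intro E hE
    obtain ⟨⟨a, haSE⟩, hSE⟩ := mem_crossers.mp hE
    by_cases hpE : p ∈ E
    · have hsd : S \ E = T \ E := by
        rw [hT_def, erase_sdiff_comm, erase_eq_of_notMem fun h => (mem_sdiff.mp h).2 hpE]
      split_ifs with hET
      · rw [hsd]
      · have hTE : Disjoint T E := by
          rw [disjoint_iff_inter_eq_empty, ← not_nonempty_iff_eq_empty]
          exact fun h => hET ⟨h, hsd ▸ hSE⟩
        rw [hsd, hTE.sdiff_eq_left]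
    · by_cases hTE : (T \ E).Nonempty
      · have hET : Crosses E T := by
          refine ⟨⟨a, ?_⟩, hTE⟩
          obtain ⟨haS, haE⟩ := mem_inter.mp haSE
          exact mem_inter.mpr ⟨mem_erase.mpr ⟨fun h => hpE (h ▸ haE), haS⟩, haE⟩
        obtain ⟨b, hb⟩ := hTE
        have hpSE : p ∈ S \ E := mem_sdiff.mpr ⟨hp, hpE⟩
        have hbSE : b ∈ S \ E := sdiff_subset_sdiff hTS le_rfl hb
        have hbp : p ≠ b := fun h => (mem_erase.mp (mem_sdiff.mp hb).1).1 h.symm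
        rw [if_pos hET, hT_def, erase_sdiff_comm]
        exact fval_le_fval_erase_of_forall_ell_le hz hnd hpSE
          (one_lt_card.mpr ⟨p, hpSE, b, hbSE, hbp⟩) fun q hq => hmin q (mem_sdiff.mp hq).1
      · have hSE_eq : S \ E = {p} := by
          rw [not_nonempty_iff_eq_empty, hT_def, erase_sdiff_comm, erase_eq_empty_iff] at hTE
          exact hTE.resolve_left hSE.ne_empty
        rw [hSE_eq, fval_singleton, if_neg fun h => hTE h.2]
        exact le_fval_of_forall_le_ell hz hnd hT fun q hq => hmin q (hTS hq)
  have hD := hnd S h2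
  rw [fval_of_two_le_card h2 hD, div_le_iff₀ hD, mul_comm,
    ← sum_crossers_mul_ite_crosses hnd hTS]
  exact sum_le_sum fun E hE => mul_le_mul_of_nonneg_left (hbound E hE) (hz E)
termination_by S.card
decreasing_by exact card_sdiff_lt_of_mem_crossers hE

end Nondegenerate

section Derivative

open Filter Topology

omit [Fintype α] [DecidableEq α] in
theorem hasDerivAt_add_smul_apply (z v : Finset α → ℝ) (E : Finset α) (t : ℝ) :
    HasDerivAt (fun s : ℝ => (z + s • v) E) (v E) t := by
  simpa using ((hasDerivAt_id t).mul_const (v E)).const_add (z E)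

theorem ell_add_smul (z v : Finset α → ℝ) (t : ℝ) (p : α) :
    ell (z + t • v) p = ell z p + t * ell v p := by
  simp [ell, sum_add_distrib, mul_sum]

theorem hasDerivAt_fval_add_smul_singleton (z v : Finset α → ℝ) (p : α) :
    HasDerivAt (fun t : ℝ => fval (z + t • v) {p}) (ell v p) 0 := by
  simp only [fval_singleton, ell_add_smul]
  simpa using ((hasDerivAt_id (0 : ℝ)).mul_const (ell v p)).const_add (ell z p)

theorem hasDerivAt_fval_add_smul {z : Finset α → ℝ} (hnd : Nondeg z) (v : Finset α → ℝ)
    {S : Finset α} (h2 : 2 ≤ S.card) {d : Finset α → ℝ}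
    (hd : ∀ E ∈ crossers S, HasDerivAt (fun t : ℝ => fval (z + t • v) (S \ E)) (d E) 0) :
    HasDerivAt (fun t : ℝ => fval (z + t • v) S)
      ((∑ E ∈ crossers S, (v E * (fval z (S \ E) - fval z S) + z E * d E)) /
        ∑ E ∈ crossers S, z E) 0 := by
  have hD := hnd S h2
  have hDt : HasDerivAt (fun t : ℝ => ∑ E ∈ crossers S, (z + t • v) E)
      (∑ E ∈ crossers S, v E) 0 :=
    HasDerivAt.fun_sum fun E _ => hasDerivAt_add_smul_apply z v E 0
  have hNt : HasDerivAt
      (fun t : ℝ => ∑ E ∈ crossers S, (z + t • v) E * fval (z + t • v) (S \ E))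
      (∑ E ∈ crossers S, (v E * fval z (S \ E) + z E * d E)) 0 := by
    refine HasDerivAt.fun_sum fun E hE => ?_
    simpa using (hasDerivAt_add_smul_apply z v E 0).fun_mul (hd E hE)
  have hpos : ∀ᶠ t in 𝓝 (0 : ℝ), 0 < ∑ E ∈ crossers S, (z + t • v) E :=
    hDt.continuousAt.eventually (lt_mem_nhds (by simpa using hD))
  have heq : (fun t : ℝ => fval (z + t • v) S) =ᶠ[𝓝 0] fun t =>
      (∑ E ∈ crossers S, (z + t • v) E * fval (z + t • v) (S \ E)) /
        ∑ E ∈ crossers S, (z + t • v) E :=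
    hpos.mono fun t ht => fval_of_two_le_card h2 ht
  refine ((hNt.div hDt (by simpa using hD.ne')).congr_of_eventuallyEq heq).congr_deriv ?_
  have hnum : ∑ E ∈ crossers S, (v E * (fval z (S \ E) - fval z S) + z E * d E)
      = ∑ E ∈ crossers S, (v E * fval z (S \ E) + z E * d E)
        - (∑ E ∈ crossers S, v E) * fval z S := by
    rw [sum_mul, ← sum_sub_distrib]
    exact sum_congr rfl fun E _ => by ring
  simp only [zero_smul, add_zero]
  rw [sum_crossers_mul_fval hnd, hnum]
  field_simp

end Derivative

section Lift

def liftDir (S' : Finset α) : Finset α → ℝ :=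
  fun E => if E.card = 1 ∧ E ⊆ S' then 1 else 0

omit [Fintype α] in
theorem zlift_eq_add_smul (z : Finset α → ℝ) (S' : Finset α) (t : ℝ) :
    zlift z S' t = z + t • liftDir S' := by
  funext E
  simp only [zlift, liftDir, Pi.add_apply, Pi.smul_apply, smul_eq_mul]
  split_ifs <;> ring

theorem ell_liftDir (S' : Finset α) (p : α) : ell (liftDir S') p = if p ∈ S' then 1 else 0 := by
  rw [ell, sum_eq_single_of_mem {p} (by simp) fun E hE hEp => ?_]
  · simp [liftDir]
  · obtain ⟨a, rfl⟩ | hE1 := em (∃ a, E = {a})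
    · simp_all
    · simp [liftDir, card_eq_one, hE1]

omit [Fintype α] in
theorem zlift_apply_of_disjoint (z : Finset α → ℝ) {S S' E : Finset α} (t : ℝ)
    (hSS' : Disjoint S S') (hE : (E ∩ S).Nonempty) : zlift z S' t E = z E := by
  rw [zlift, if_neg]
  rintro ⟨h1, hES'⟩
  obtain ⟨a, rfl⟩ := card_eq_one.mp h1
  obtain ⟨b, hb⟩ := hE
  rw [mem_inter, mem_singleton] at hb
  exact disjoint_left.mp hSS' (hb.1 ▸ hb.2) (hES' (mem_singleton_self a))

theorem exists_nonneg_hasDerivAt_fval_add_smul_liftDir {z : Finset α → ℝ} (hz : ∀ E, 0 ≤ z E)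
    (hnd : Nondeg z) (S' : Finset α) {S : Finset α} (hS : S.Nonempty)
    (hmin : ∀ p ∈ S ∩ S', ∀ q ∈ S, ell z p ≤ ell z q) :
    ∃ d, 0 ≤ d ∧ HasDerivAt (fun t : ℝ => fval (z + t • liftDir S') S) d 0 := by
  by_cases hc : S.card ≤ 1
  · obtain ⟨p, rfl⟩ := card_eq_one.mp (le_antisymm hc hS.card_pos)
    refine ⟨_, ?_, hasDerivAt_fval_add_smul_singleton z _ p⟩
    rw [ell_liftDir]
    split_ifs <;> norm_num
  have h2 : 2 ≤ S.card := by omega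
  have hrec : ∀ E ∈ crossers S, ∃ d, 0 ≤ d ∧
      HasDerivAt (fun t : ℝ => fval (z + t • liftDir S') (S \ E)) d 0 := fun E hE =>
    exists_nonneg_hasDerivAt_fval_add_smul_liftDir hz hnd S' (mem_crossers.mp hE).2
      fun p hp q hq => hmin p (inter_subset_inter_right sdiff_subset hp) q (sdiff_subset hq)
  choose! d hd0 hd using hrec
  -- a crossing `E` with nonzero lift is some `{a}`, `a ∈ S ∩ S'`, and `ℓ a` is minimal on `S`
  have hlift : ∀ E ∈ crossers S, 0 ≤ liftDir S' E * (fval z (S \ E) - fval z S) := by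
    intro E hE
    rw [liftDir]
    split_ifs with hE1
    · obtain ⟨a, rfl⟩ := card_eq_one.mp hE1.1
      have haS : a ∈ S := by
        obtain ⟨b, hb⟩ := (mem_crossers.mp hE).1
        rw [mem_inter, mem_singleton] at hb
        exact hb.2 ▸ hb.1
      rw [one_mul, sub_nonneg, sdiff_singleton_eq_erase]
      exact fval_le_fval_erase_of_forall_ell_le hz hnd haS h2
        (hmin a (mem_inter.mpr ⟨haS, hE1.2 (mem_singleton_self a)⟩))
    · rw [zero_mul]
  refine ⟨_, div_nonneg (sum_nonneg fun E hE => add_nonneg (hlift E hE)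
    (mul_nonneg (hz E) (hd0 E hE))) (hnd S h2).le, hasDerivAt_fval_add_smul hnd _ h2 hd⟩
termination_by S.card
decreasing_by exact card_sdiff_lt_of_mem_crossers hE

end Lift

/-- derivatives of `f` along the lifting trajectory. -/
theorem stmt12 {α : Type*} [Fintype α] [DecidableEq α]
    (z : Finset α → ℝ) (hz : ∀ E : Finset α, 0 ≤ z E) (hnd : Nondeg z)
    (S' S : Finset α) (hS : S.Nonempty) :
    (S ∩ S' = ∅ → deriv (fun t : ℝ => fval (zlift z S' t) S) 0 = 0) ∧
    (∀ p ∈ S', S = {p} → deriv (fun t : ℝ => fval (zlift z S' t) S) 0 = 1) ∧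
    ((∀ p ∈ S ∩ S', ∀ q ∈ S, ell z p ≤ ell z q) →
      0 ≤ deriv (fun t : ℝ => fval (zlift z S' t) S) 0) := by
  have hlift : (fun t : ℝ => fval (zlift z S' t) S) = fun t => fval (z + t • liftDir S') S := by
    simp_rw [zlift_eq_add_smul]
  refine ⟨fun hdisj => ?_, fun p hp hSp => ?_, fun hmin => ?_⟩
  · have hconst : (fun t : ℝ => fval (zlift z S' t) S) = fun _ => fval z S :=
      funext fun t => fval_congr S fun E hE =>
        zlift_apply_of_disjoint z t (disjoint_iff_inter_eq_empty.mpr hdisj) hE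
    rw [hconst, deriv_const]
  · subst hSp
    rw [hlift, (hasDerivAt_fval_add_smul_singleton z _ p).deriv, ell_liftDir, if_pos hp]
  · obtain ⟨d, hd0, hd⟩ := exists_nonneg_hasDerivAt_fval_add_smul_liftDir hz hnd S' hS hmin
    rwa [hlift, hd.deriv]
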